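/- Let H be a vertex-minimal finite simple graph with θ(H) ≤ 7 and χ'_s(H) > 13. Then H contains no triangle. -/

import Mathlib

/-!
In a triangle `apq` one of `a`, `p` has degree at most 3, since `d(a) + d(p) ≤ 7`; say `a`.
Colour `H − a` by minimality and extend greedily to the two or three edges at `a`. An edge at `a`
sees few coloured edges: every vertex near it has small degree, and as `p` and `q` are adjacent,
the naive count over their neighbourhoods counts `pq` and the edges at `p`, `q` twice. The one
tight spot is the third edge `ax` when `d(a) = 3`: it may see 13 coloured edges, but one of them
is `pq`, which sees at most 10, so `pq` can be recoloured with a colour already used among the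
other 12, leaving a colour free for `ax`.
-/

open SimpleGraph

variable {V : Type*}

def EdgeSees (G : SimpleGraph V) (e e' : Sym2 V) : Prop :=
  e ≠ e' ∧ ∃ a ∈ e, ∃ b ∈ e', a = b ∨ G.Adj a b

def HasStrongColoring (G : SimpleGraph V) (N : ℕ) : Prop :=
  ∃ f : G.edgeSet → Fin N, ∀ e e' : G.edgeSet, EdgeSees G e.val e'.val → f e ≠ f e'

def DelV (G : SimpleGraph V) (v : V) : SimpleGraph V where
  Adj a b := G.Adj a b ∧ a ≠ v ∧ b ≠ v
  symm := ⟨fun _ _ h => ⟨h.1.symm, h.2.2, h.2.1⟩⟩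
  loopless := ⟨fun a h => G.loopless.irrefl a h.1⟩

section EdgeSees

variable {G G' : SimpleGraph V} {e e' : Sym2 V} {a : V}

theorem EdgeSees.symm (h : EdgeSees G e e') : EdgeSees G e' e := by
  obtain ⟨hne, u, hu, v, hv, huv⟩ := h
  exact ⟨hne.symm, v, hv, u, hu, huv.imp Eq.symm fun h => h.symm⟩

theorem EdgeSees.mono (hle : G ≤ G') (h : EdgeSees G e e') : EdgeSees G' e e' := by
  obtain ⟨hne, u, hu, v, hv, huv⟩ := h
  exact ⟨hne, u, hu, v, hv, huv.imp_right (@hle u v)⟩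

theorem EdgeSees.exists_mem_of_mk {u v : V} (h : EdgeSees G s(u, v) e) :
    ∃ β ∈ e, (u = β ∨ G.Adj u β) ∨ (v = β ∨ G.Adj v β) := by
  obtain ⟨-, α, hα, β, hβ, h⟩ := h
  rcases Sym2.mem_iff.1 hα with rfl | rfl
  exacts [⟨β, hβ, Or.inl h⟩, ⟨β, hβ, Or.inr h⟩]

theorem delV_le : DelV G a ≤ G := fun _ _ h => h.1

theorem mem_edgeSet_delV : e ∈ (DelV G a).edgeSet ↔ e ∈ G.edgeSet ∧ a ∉ e := by
  induction e using Sym2.ind with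
  | _ x y =>
    simp only [mem_edgeSet, DelV, Sym2.mem_iff, not_or]
    exact ⟨fun ⟨h, hx, hy⟩ => ⟨h, Ne.symm hx, Ne.symm hy⟩,
      fun ⟨h, hx, hy⟩ => ⟨h, Ne.symm hx, Ne.symm hy⟩⟩

theorem EdgeSees.delV (he : e ∈ (DelV G a).edgeSet) (he' : e' ∈ (DelV G a).edgeSet)
    (h : EdgeSees G e e') : EdgeSees (DelV G a) e e' := by
  obtain ⟨hne, u, hu, v, hv, huv⟩ := h
  have hua : u ≠ a := by rintro rfl; exact (mem_edgeSet_delV.1 he).2 hu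
  have hva : v ≠ a := by rintro rfl; exact (mem_edgeSet_delV.1 he').2 hv
  exact ⟨hne, u, hu, v, hv, huv.imp_right fun h => ⟨h, hua, hva⟩⟩

end EdgeSees

section Coloring

variable {α : Type*} {G : SimpleGraph V} {F : Sym2 V → α}

def IsStrongEdgeColoring (G : SimpleGraph V) (F : Sym2 V → α) : Prop :=
  ∀ e ∈ G.edgeSet, ∀ e' ∈ G.edgeSet, EdgeSees G e e' → F e ≠ F e'

theorem HasStrongColoring.exists_isStrongEdgeColoring {N : ℕ} [NeZero N]
    (h : HasStrongColoring G N) : ∃ F : Sym2 V → Fin N, IsStrongEdgeColoring G F := by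
  classical
  obtain ⟨f, hf⟩ := h
  refine ⟨fun e => if h : e ∈ G.edgeSet then f ⟨e, h⟩ else 0, fun e he e' he' hs => ?_⟩
  simpa [he, he'] using hf ⟨e, he⟩ ⟨e', he'⟩ hs

theorem IsStrongEdgeColoring.hasStrongColoring {N : ℕ} {F : Sym2 V → Fin N}
    (hF : IsStrongEdgeColoring G F) : HasStrongColoring G N :=
  ⟨fun e => F e, fun e e' hs => hF e e.2 e' e'.2 hs⟩

/-- The edges of `G` that see `e₀` in `H`: a colour for `e₀` has to avoid their colours. -/
noncomputable def conflictSet [Finite V] (H G : SimpleGraph V) (e₀ : Sym2 V) : Finset (Sym2 V) :=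
  (Set.toFinite {e | e ∈ G.edgeSet ∧ EdgeSees H e₀ e}).toFinset

theorem mem_conflictSet [Finite V] {H : SimpleGraph V} {e₀ e : Sym2 V} :
    e ∈ conflictSet H G e₀ ↔ e ∈ G.edgeSet ∧ EdgeSees H e₀ e :=
  Set.Finite.mem_toFinset _

theorem mem_conflictSet_delV [Finite V] {H : SimpleGraph V} {a : V} {e₀ e : Sym2 V} :
    e ∈ conflictSet H (DelV H a) e₀ ↔ (e ∈ H.edgeSet ∧ a ∉ e) ∧ EdgeSees H e₀ e := by
  rw [mem_conflictSet, mem_edgeSet_delV]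

theorem conflictSet_mono [Finite V] {H : SimpleGraph V} (hle : G ≤ H) (e₀ : Sym2 V) :
    conflictSet G G e₀ ⊆ conflictSet H G e₀ := fun _ he =>
  mem_conflictSet.2 ((mem_conflictSet.1 he).imp_right (EdgeSees.mono hle))

theorem IsStrongEdgeColoring.update [DecidableEq V] (hF : IsStrongEdgeColoring G F)
    {e₀ : Sym2 V} {γ : α} (hγ : ∀ e ∈ G.edgeSet, EdgeSees G e₀ e → F e ≠ γ) :
    IsStrongEdgeColoring G (Function.update F e₀ γ) := by
  intro e he e' he' hs
  by_cases h : e = e₀ <;> by_cases h' : e' = e₀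
  · exact absurd (h.trans h'.symm) hs.1
  · subst h
    rw [Function.update_self, Function.update_of_ne h']
    exact (hγ e' he' hs).symm
  · subst h'
    rw [Function.update_self, Function.update_of_ne h]
    exact hγ e he hs.symm
  · rw [Function.update_of_ne h, Function.update_of_ne h']
    exact hF e he e' he' hs

/-- When `S.erase e₀` already shows `m` colours, `e₀` can take one of them. -/
theorem IsStrongEdgeColoring.exists_card_image_le [Finite V] [DecidableEq V] [DecidableEq α]
    (hF : IsStrongEdgeColoring G F) (e₀ : Sym2 V) (S : Finset (Sym2 V)) {m : ℕ}
    (hS : (S.erase e₀).card ≤ m) (hconf : (conflictSet G G e₀).card < m) :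
    ∃ F' : Sym2 V → α, IsStrongEdgeColoring G F' ∧ (S.image F').card ≤ m := by
  set T := S.erase e₀
  by_cases hT : (T.image F).card < m
  · refine ⟨F, hF, ?_⟩
    calc (S.image F).card ≤ ((insert e₀ T).image F).card :=
          Finset.card_le_card (Finset.image_subset_image (Finset.insert_erase_subset e₀ S))
      _ ≤ (T.image F).card + 1 := by
          rw [Finset.image_insert]; exact Finset.card_insert_le _ _
      _ ≤ m := hT
  · obtain ⟨γ, hγT, hγ⟩ := Finset.exists_mem_notMem_of_card_lt_card
      (s := (conflictSet G G e₀).image F) (t := T.image F)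
      (by have := (conflictSet G G e₀).card_image_le (f := F); omega)
    refine ⟨Function.update F e₀ γ, hF.update fun e he hs h => ?_, ?_⟩
    · exact hγ (Finset.mem_image.2 ⟨e, mem_conflictSet.2 ⟨he, hs⟩, h⟩)
    · have hsub : S.image (Function.update F e₀ γ) ⊆ T.image F := by
        intro c hc
        obtain ⟨s, hs, rfl⟩ := Finset.mem_image.1 hc
        by_cases hse : s = e₀
        · rwa [hse, Function.update_self]
        · rw [Function.update_of_ne hse]
          exact Finset.mem_image_of_mem _ (Finset.mem_erase.2 ⟨hse, hs⟩)
      exact (Finset.card_le_card hsub).trans (Finset.card_image_le.trans hS)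

theorem IsStrongEdgeColoring.exists_extension [Finite V] [DecidableEq α] {H : SimpleGraph V}
    {a : V} (hF : IsStrongEdgeColoring (DelV H a) F) (c : V → α)
    (hc : ∀ w, H.Adj a w → c w ∉ (conflictSet H (DelV H a) s(a, w)).image F)
    (hinj : Set.InjOn c (H.neighborSet a)) :
    ∃ F' : Sym2 V → α, IsStrongEdgeColoring H F' := by
  classical
  set F' : Sym2 V → α := fun e => if h : a ∈ e then c (Sym2.Mem.other h) else F e
  have hF'a : ∀ w, F' s(a, w) = c w := fun w => by
    simp only [F', dif_pos (Sym2.mem_mk_left a w)]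
    rw [Sym2.congr_right.1 (Sym2.other_spec (Sym2.mem_mk_left a w))]
  have hF'F : ∀ e, a ∉ e → F' e = F e := fun e h => dif_neg h
  have hstar : ∀ e ∈ H.edgeSet, a ∈ e → ∃ w, H.Adj a w ∧ e = s(a, w) := fun e he h =>
    ⟨_, by rwa [← Sym2.other_spec h] at he, (Sym2.other_spec h).symm⟩
  have hmixed : ∀ e ∈ H.edgeSet, a ∈ e → ∀ e' ∈ H.edgeSet, a ∉ e' →
      EdgeSees H e e' → F' e ≠ F' e' := by
    intro e he hae e' he' hae' hs
    obtain ⟨w, hw, rfl⟩ := hstar e he hae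
    rw [hF'a, hF'F e' hae']
    exact fun h => hc w hw (Finset.mem_image.2
      ⟨e', mem_conflictSet_delV.2 ⟨⟨he', hae'⟩, hs⟩, h.symm⟩)
  refine ⟨F', fun e he e' he' hs => ?_⟩
  by_cases hae : a ∈ e <;> by_cases hae' : a ∈ e'
  · obtain ⟨w, hw, rfl⟩ := hstar e he hae
    obtain ⟨w', hw', rfl⟩ := hstar e' he' hae'
    rw [hF'a, hF'a]
    exact fun h => hs.1 (by rw [hinj hw hw' h])
  · exact hmixed e he hae e' he' hae' hs
  · exact (hmixed e' he' hae' e he hae hs.symm).symm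
  · have he₁ := mem_edgeSet_delV.2 ⟨he, hae⟩
    have he₂ := mem_edgeSet_delV.2 ⟨he', hae'⟩
    rw [hF'F e hae, hF'F e' hae']
    exact hF e he₁ e' he₂ (hs.delV he₁ he₂)

end Coloring

namespace SimpleGraph

variable [Fintype V] [DecidableEq V] (H : SimpleGraph V) [DecidableRel H.Adj]

def starEdges (u : V) (X : Finset V) : Finset (Sym2 V) :=
  H.incidenceFinset u \ X.image (s(u, ·))

def outerEdges (u : V) (X : Finset V) : Finset (Sym2 V) :=
  (H.neighborFinset u \ X).biUnion fun y => (H.incidenceFinset y).erase s(u, y)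

/-- Edges meeting `u` or a neighbour of `u` outside `X`, except the edges `uy` with `y ∈ X`: the
edges at the neighbours in `X` are left to be counted once, elsewhere. -/
def ballEdges (u : V) (X : Finset V) : Finset (Sym2 V) :=
  H.starEdges u X ∪ H.outerEdges u X

variable {H} {u β : V} {X : Finset V} {e : Sym2 V} {k : ℕ}

theorem mem_starEdges : e ∈ H.starEdges u X ↔ e ∈ H.edgeSet ∧ u ∈ e ∧ ∀ y ∈ X, e ≠ s(u, y) := by
  simp [starEdges, mem_incidenceFinset, incidenceSet, and_assoc, eq_comm]

theorem mem_starEdges_or_mem_outerEdges_or_exists_mem (he : e ∈ H.edgeSet) (hβ : β ∈ e)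
    (h : u = β ∨ H.Adj u β) :
    e ∈ H.starEdges u X ∨ e ∈ H.outerEdges u X ∨ ∃ y ∈ X, y ∈ e := by
  by_cases hX : ∃ y ∈ X, y ∈ e
  · exact Or.inr (Or.inr hX)
  push Not at hX
  rcases h with rfl | hadj
  · exact Or.inl (mem_starEdges.2 ⟨he, hβ, fun y hy hey => hX y hy (hey ▸ Sym2.mem_mk_right u y)⟩)
  by_cases heu : e = s(u, β)
  · subst heu
    exact Or.inl (mem_starEdges.2 ⟨he, Sym2.mem_mk_left u β,
      fun y hy hey => hX y hy (hey ▸ Sym2.mem_mk_right u y)⟩)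
  · refine Or.inr (Or.inl (Finset.mem_biUnion.2 ⟨β, ?_, Finset.mem_erase.2 ⟨heu, ?_⟩⟩))
    · exact Finset.mem_sdiff.2 ⟨(mem_neighborFinset H u β).2 hadj, fun h => hX β h hβ⟩
    · exact (mem_incidenceFinset H β e).2 ⟨he, hβ⟩

theorem mem_ballEdges_or_exists_mem (he : e ∈ H.edgeSet) (hβ : β ∈ e) (h : u = β ∨ H.Adj u β) :
    e ∈ H.ballEdges u X ∨ ∃ y ∈ X, y ∈ e := by
  rcases mem_starEdges_or_mem_outerEdges_or_exists_mem he hβ h with h | h | h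
  exacts [Or.inl (Finset.mem_union_left _ h), Or.inl (Finset.mem_union_right _ h), Or.inr h]

theorem mem_outerEdges_or_exists_mem (he : e ∈ H.edgeSet) (hue : u ∉ e) (hβ : β ∈ e)
    (h : u = β ∨ H.Adj u β) : e ∈ H.outerEdges u X ∨ ∃ y ∈ X, y ∈ e := by
  rcases mem_starEdges_or_mem_outerEdges_or_exists_mem he hβ h with h | h | h
  exacts [absurd (mem_starEdges.1 h).2.1 hue, Or.inl h, Or.inr h]

theorem pair_subset_neighborFinset {u y z : V} (hy : H.Adj u y) (hz : H.Adj u z) :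
    ({y, z} : Finset V) ⊆ H.neighborFinset u := by
  simp [Finset.insert_subset_iff, hy, hz]

theorem card_starEdges (hX : X ⊆ H.neighborFinset u) :
    (H.starEdges u X).card = H.degree u - X.card := by
  have hsub : X.image (s(u, ·)) ⊆ H.incidenceFinset u := by
    intro e he
    obtain ⟨y, hy, rfl⟩ := Finset.mem_image.1 he
    exact (mem_incidenceFinset H u _).2
      ((H.mk'_mem_incidenceSet_left_iff).2 ((mem_neighborFinset H u y).1 (hX hy)))
  rw [starEdges, Finset.card_sdiff_of_subset hsub, card_incidenceFinset_eq_degree,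
    Finset.card_image_of_injective _ fun y y' h => Sym2.congr_right.1 h]

theorem card_outerEdges_le (hθ : ∀ y, H.Adj u y → H.degree u + H.degree y ≤ k)
    (hX : X ⊆ H.neighborFinset u) :
    (H.outerEdges u X).card ≤ (H.degree u - X.card) * (k - 1 - H.degree u) := by
  rw [← card_neighborFinset_eq_degree, ← Finset.card_sdiff_of_subset hX]
  refine Finset.card_biUnion_le_card_mul _ _ _ fun y hy => ?_
  have hadj := (mem_neighborFinset H u y).1 (Finset.mem_sdiff.1 hy).1
  rw [Finset.card_erase_of_mem ((mem_incidenceFinset H y _).2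
    ((H.mk'_mem_incidenceSet_right_iff).2 hadj)), card_incidenceFinset_eq_degree,
    card_neighborFinset_eq_degree]
  have := hθ y hadj
  omega

theorem card_ballEdges_le (hθ : ∀ y, H.Adj u y → H.degree u + H.degree y ≤ k)
    (hX : X ⊆ H.neighborFinset u) :
    (H.ballEdges u X).card ≤ (H.degree u - X.card) * (k - H.degree u) := by
  have hcard := (Finset.card_union_le _ _).trans
    (add_le_add (card_starEdges hX).le (card_outerEdges_le hθ hX))
  rcases Nat.eq_zero_or_pos (H.degree u) with hd | hd
  · simpa [ballEdges, hd] using hcard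
  · obtain ⟨y, hy⟩ := (H.degree_pos_iff_exists_adj u).1 hd
    have hy' := (H.degree_pos_iff_exists_adj y).2 ⟨u, hy.symm⟩
    have hk : k - H.degree u = k - 1 - H.degree u + 1 := by have := hθ y hy; omega
    rw [hk, Nat.mul_succ]
    exact hcard.trans_eq (add_comm _ _)

end SimpleGraph

section ConflictBounds

open SimpleGraph

variable [Fintype V] [DecidableEq V] {H : SimpleGraph V} [DecidableRel H.Adj] {a p q x : V}
  {k : ℕ}

theorem card_conflictSet_triangle_le
    (hθa : ∀ y, H.Adj a y → H.degree a + H.degree y ≤ k)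
    (hθp : ∀ y, H.Adj p y → H.degree p + H.degree y ≤ k)
    (hap : H.Adj a p) (haq : H.Adj a q) (hpq : H.Adj p q) :
    (conflictSet H (DelV H a) s(a, p)).card ≤
      (H.degree q - 1) + (H.degree a - 2) * (k - 1 - H.degree a) +
        (H.degree p - 2) * (k - H.degree p) := by
  have hcover : conflictSet H (DelV H a) s(a, p) ⊆
      H.starEdges q {a} ∪ H.outerEdges a {p, q} ∪ H.ballEdges p {a, q} := by
    intro e he
    obtain ⟨⟨heH, hae⟩, hs⟩ := mem_conflictSet_delV.1 he
    have hq : q ∈ e → e ∈ H.starEdges q {a} := fun h =>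
      mem_starEdges.2 ⟨heH, h, by rintro y hy rfl; simp_all⟩
    have hp : ∀ β ∈ e, p = β ∨ H.Adj p β →
        e ∈ H.starEdges q {a} ∪ H.outerEdges a {p, q} ∪ H.ballEdges p {a, q} := by
      intro β hβ h
      rcases mem_ballEdges_or_exists_mem (X := {a, q}) heH hβ h with h | ⟨y, hy, hye⟩
      · simp [h]
      · simp only [Finset.mem_insert, Finset.mem_singleton] at hy
        rcases hy with rfl | rfl
        exacts [absurd hye hae, by simp [hq hye]]
    obtain ⟨β, hβ, h | h⟩ := hs.exists_mem_of_mk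
    · rcases mem_outerEdges_or_exists_mem (X := {p, q}) heH hae hβ h with h | ⟨y, hy, hye⟩
      · simp [h]
      · simp only [Finset.mem_insert, Finset.mem_singleton] at hy
        rcases hy with rfl | rfl
        exacts [hp y hye (Or.inl rfl), by simp [hq hye]]
    · exact hp β hβ h
  have hq : (H.starEdges q {a}).card ≤ H.degree q - 1 := by
    rw [card_starEdges (Finset.singleton_subset_iff.2 ((mem_neighborFinset H q a).2 haq.symm))]
    simp
  have ho := card_outerEdges_le hθa (pair_subset_neighborFinset hap haq)
  have hb := card_ballEdges_le hθp (pair_subset_neighborFinset hap.symm hpq)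
  rw [Finset.card_pair (H.ne_of_adj hpq)] at ho
  rw [Finset.card_pair (H.ne_of_adj haq)] at hb
  exact (Finset.card_le_card hcover).trans <| (Finset.card_union_le _ _).trans <|
    add_le_add ((Finset.card_union_le _ _).trans (add_le_add hq ho)) hb

theorem card_conflictSet_opposite_le
    (hθp : ∀ y, H.Adj p y → H.degree p + H.degree y ≤ k)
    (hθq : ∀ y, H.Adj q y → H.degree q + H.degree y ≤ k)
    (hap : H.Adj a p) (haq : H.Adj a q) (hpq : H.Adj p q) :
    (conflictSet H (DelV H a) s(p, q)).card ≤
      (H.degree p - 2) * (k - H.degree p) + (H.degree q - 2) * (k - H.degree q) := by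
  have hcover : conflictSet H (DelV H a) s(p, q) ⊆ H.ballEdges p {a, q} ∪ H.ballEdges q {a, p} := by
    intro e he
    obtain ⟨⟨heH, hae⟩, hs⟩ := mem_conflictSet_delV.1 he
    have hp : p ∈ e → e ∈ H.ballEdges p {a, q} := fun h => Finset.mem_union_left _ <|
      mem_starEdges.2 ⟨heH, h, by
        simp only [Finset.mem_insert, Finset.mem_singleton]
        rintro y (rfl | rfl) rfl
        exacts [hae (Sym2.mem_mk_right _ _), hs.1 rfl]⟩
    have hq : q ∈ e → e ∈ H.ballEdges q {a, p} := fun h => Finset.mem_union_left _ <|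
      mem_starEdges.2 ⟨heH, h, by
        simp only [Finset.mem_insert, Finset.mem_singleton]
        rintro y (rfl | rfl) rfl
        exacts [hae (Sym2.mem_mk_right _ _), hs.1 Sym2.eq_swap]⟩
    obtain ⟨β, hβ, h | h⟩ := hs.exists_mem_of_mk
    · rcases mem_ballEdges_or_exists_mem (X := {a, q}) heH hβ h with h | ⟨y, hy, hye⟩
      · simp [h]
      · simp only [Finset.mem_insert, Finset.mem_singleton] at hy
        rcases hy with rfl | rfl
        exacts [absurd hye hae, by simp [hq hye]]
    · rcases mem_ballEdges_or_exists_mem (X := {a, p}) heH hβ h with h | ⟨y, hy, hye⟩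
      · simp [h]
      · simp only [Finset.mem_insert, Finset.mem_singleton] at hy
        rcases hy with rfl | rfl
        exacts [absurd hye hae, by simp [hp hye]]
  have hbp := card_ballEdges_le hθp (pair_subset_neighborFinset hap.symm hpq)
  have hbq := card_ballEdges_le hθq (pair_subset_neighborFinset haq.symm hpq.symm)
  rw [Finset.card_pair (H.ne_of_adj haq)] at hbp
  rw [Finset.card_pair (H.ne_of_adj hap)] at hbq
  exact (Finset.card_le_card hcover).trans <| (Finset.card_union_le _ _).trans (add_le_add hbp hbq)

theorem card_conflictSet_erase_le
    (hθa : ∀ y, H.Adj a y → H.degree a + H.degree y ≤ k)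
    (hθx : ∀ y, H.Adj x y → H.degree x + H.degree y ≤ k)
    (hax : H.Adj a x) (hap : H.Adj a p) (haq : H.Adj a q) (hpq : H.Adj p q)
    (hxp : x ≠ p) (hxq : x ≠ q) :
    ((conflictSet H (DelV H a) s(a, x)).erase s(p, q)).card ≤
      (H.degree x - 1) * (k - H.degree x) + (H.degree p - 2) + (H.degree q - 2) +
        (H.degree a - 3) * (k - 1 - H.degree a) := by
  have hcover : (conflictSet H (DelV H a) s(a, x)).erase s(p, q) ⊆
      H.ballEdges x {a} ∪ H.starEdges p {a, q} ∪ H.starEdges q {a, p} ∪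
        H.outerEdges a {x, p, q} := by
    intro e he
    obtain ⟨hepq, he⟩ := Finset.mem_erase.1 he
    obtain ⟨⟨heH, hae⟩, hs⟩ := mem_conflictSet_delV.1 he
    have hx : x ∈ e → e ∈ H.ballEdges x {a} := fun h => Finset.mem_union_left _ <|
      mem_starEdges.2 ⟨heH, h, by rintro y hy rfl; simp_all⟩
    have hp : p ∈ e → e ∈ H.starEdges p {a, q} := fun h =>
      mem_starEdges.2 ⟨heH, h, by
        simp only [Finset.mem_insert, Finset.mem_singleton]
        rintro y (rfl | rfl) rfl
        exacts [hae (Sym2.mem_mk_right _ _), hepq rfl]⟩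
    have hq : q ∈ e → e ∈ H.starEdges q {a, p} := fun h =>
      mem_starEdges.2 ⟨heH, h, by
        simp only [Finset.mem_insert, Finset.mem_singleton]
        rintro y (rfl | rfl) rfl
        exacts [hae (Sym2.mem_mk_right _ _), hepq Sym2.eq_swap]⟩
    obtain ⟨β, hβ, h | h⟩ := hs.exists_mem_of_mk
    · rcases mem_outerEdges_or_exists_mem (X := {x, p, q}) heH hae hβ h with h | ⟨y, hy, hye⟩
      · simp [h]
      · simp only [Finset.mem_insert, Finset.mem_singleton] at hy
        rcases hy with rfl | rfl | rfl
        exacts [by simp [hx hye], by simp [hp hye], by simp [hq hye]]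
    · rcases mem_ballEdges_or_exists_mem (X := {a}) heH hβ h with h | ⟨y, hy, hye⟩
      · simp [h]
      · exact absurd (Finset.mem_singleton.1 hy ▸ hye) hae
  have hbx := card_ballEdges_le hθx (Finset.singleton_subset_iff.2
    ((mem_neighborFinset H x a).2 hax.symm))
  have hsp := card_starEdges (pair_subset_neighborFinset hap.symm hpq)
  have hsq := card_starEdges (pair_subset_neighborFinset haq.symm hpq.symm)
  have ho := card_outerEdges_le hθa (X := {x, p, q}) (by
    simp [Finset.insert_subset_iff, hax, hap, haq])
  rw [Finset.card_singleton] at hbx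
  rw [Finset.card_pair (H.ne_of_adj haq)] at hsp
  rw [Finset.card_pair (H.ne_of_adj hap)] at hsq
  rw [Finset.card_insert_of_notMem (by simp [hxp, hxq]), Finset.card_pair (H.ne_of_adj hpq)] at ho
  exact (Finset.card_le_card hcover).trans <| (Finset.card_union_le _ _).trans <|
    add_le_add ((Finset.card_union_le _ _).trans <| add_le_add
      ((Finset.card_union_le _ _).trans (add_le_add hbx hsp.le)) hsq.le) ho

end ConflictBounds

theorem exists_notMem_of_card_lt {N : ℕ} (s : Finset (Fin N)) (h : s.card < N) : ∃ c, c ∉ s := by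
  obtain ⟨c, -, hc⟩ := Finset.exists_mem_notMem_of_card_lt_card (s := s) (t := .univ)
    (by rwa [Finset.card_univ, Fintype.card_fin])
  exact ⟨c, hc⟩

section Extension

open SimpleGraph

variable [Fintype V] [DecidableEq V] {H : SimpleGraph V} [DecidableRel H.Adj] {a p q x : V}
  {N : ℕ} {F : Sym2 V → Fin N}

theorem IsStrongEdgeColoring.hasStrongColoring_of_neighborFinset_eq_pair
    (hF : IsStrongEdgeColoring (DelV H a) F) (hpq : p ≠ q) (hN : H.neighborFinset a = {p, q})
    (hp : ((conflictSet H (DelV H a) s(a, p)).image F).card < N)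
    (hq : ((conflictSet H (DelV H a) s(a, q)).image F).card + 1 < N) :
    HasStrongColoring H N := by
  obtain ⟨cp, hcp⟩ := exists_notMem_of_card_lt _ hp
  obtain ⟨cq, hcq⟩ := exists_notMem_of_card_lt _ ((Finset.card_insert_le cp _).trans_lt hq)
  rw [Finset.mem_insert, not_or] at hcq
  refine (hF.exists_extension (fun w => if w = p then cp else cq) (fun w hw => ?_) ?_).elim
    fun F' hF' => hF'.hasStrongColoring
  · rw [← mem_neighborFinset, hN, Finset.mem_insert, Finset.mem_singleton] at hw
    rcases hw with rfl | rfl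
    · simpa using hcp
    · simpa [hpq.symm] using hcq.2
  · rw [← coe_neighborFinset, hN, Finset.coe_pair, Set.injOn_pair]
    simp [hpq.symm, Ne.symm hcq.1]

theorem IsStrongEdgeColoring.hasStrongColoring_of_neighborFinset_eq_triple
    (hF : IsStrongEdgeColoring (DelV H a) F) (hxp : x ≠ p) (hxq : x ≠ q) (hpq : p ≠ q)
    (hN : H.neighborFinset a = {x, p, q})
    (hx : ((conflictSet H (DelV H a) s(a, x)).image F).card < N)
    (hp : ((conflictSet H (DelV H a) s(a, p)).image F).card + 1 < N)
    (hq : ((conflictSet H (DelV H a) s(a, q)).image F).card + 2 < N) :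
    HasStrongColoring H N := by
  obtain ⟨cx, hcx⟩ := exists_notMem_of_card_lt _ hx
  obtain ⟨cp, hcp⟩ := exists_notMem_of_card_lt _ ((Finset.card_insert_le cx _).trans_lt hp)
  obtain ⟨cq, hcq⟩ := exists_notMem_of_card_lt
      (insert cx (insert cp ((conflictSet H (DelV H a) s(a, q)).image F))) <| by
    have := Finset.card_insert_le cp ((conflictSet H (DelV H a) s(a, q)).image F)
    exact (Finset.card_insert_le cx _).trans_lt (by omega)
  simp only [Finset.mem_insert, not_or] at hcp hcq
  refine (hF.exists_extension (fun w => if w = x then cx else if w = p then cp else cq)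
    (fun w hw => ?_) ?_).elim fun F' hF' => hF'.hasStrongColoring
  · rw [← mem_neighborFinset, hN, Finset.mem_insert, Finset.mem_insert,
      Finset.mem_singleton] at hw
    rcases hw with rfl | rfl | rfl
    · simpa using hcx
    · simpa [hxp.symm] using hcp.2
    · simpa [hxq.symm, hpq.symm] using hcq.2.2
  · rw [← coe_neighborFinset, hN, Finset.coe_insert, Finset.coe_pair,
      Set.injOn_insert (by simp [hxp, hxq]), Set.injOn_pair]
    simp [hxp.symm, hxq.symm, hpq.symm, hcp.1, hcq.1, Ne.symm hcq.2.1]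

end Extension

section Triangle

open SimpleGraph

variable [Fintype V] [DecidableEq V] {H : SimpleGraph V} [DecidableRel H.Adj] {a p q x : V}

theorem hasStrongColoring_of_neighborFinset_eq_pair
    (hθ : ∀ u w, H.Adj u w → H.degree u + H.degree w ≤ 7) (hpq : H.Adj p q)
    (hN : H.neighborFinset a = {p, q}) (hHa : HasStrongColoring (DelV H a) 13) :
    HasStrongColoring H 13 := by
  have hda : H.degree a = 2 := by
    rw [← card_neighborFinset_eq_degree, hN, Finset.card_pair (H.ne_of_adj hpq)]
  have hbound : ∀ {p q}, H.Adj a p → H.Adj a q → H.Adj p q →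
      (conflictSet H (DelV H a) s(a, p)).card ≤ 10 := fun {p q} hap haq hpq => by
    have := card_conflictSet_triangle_le (k := 7) (hθ a) (hθ p) hap haq hpq
    have := hθ p q hpq
    have : H.degree p ≤ 5 := by have := hθ a p hap; omega
    rw [hda] at *
    interval_cases H.degree p <;> omega
  have hap : H.Adj a p := (mem_neighborFinset H a p).1 (by simp [hN])
  have haq : H.Adj a q := (mem_neighborFinset H a q).1 (by simp [hN])
  obtain ⟨F, hF⟩ := hHa.exists_isStrongEdgeColoring
  refine hF.hasStrongColoring_of_neighborFinset_eq_pair (H.ne_of_adj hpq) hN ?_ ?_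
  · exact Finset.card_image_le.trans_lt (by have := hbound hap haq hpq; omega)
  · have := Finset.card_image_le (s := conflictSet H (DelV H a) s(a, q)) (f := F)
    have := hbound haq hap hpq.symm
    omega

theorem hasStrongColoring_of_neighborFinset_eq_triple
    (hθ : ∀ u w, H.Adj u w → H.degree u + H.degree w ≤ 7) (hpq : H.Adj p q)
    (hxp : x ≠ p) (hxq : x ≠ q) (hN : H.neighborFinset a = {x, p, q})
    (hdeg : H.degree q ≤ H.degree p) (hHa : HasStrongColoring (DelV H a) 13) :
    HasStrongColoring H 13 := by
  have hax : H.Adj a x := (mem_neighborFinset H a x).1 (by simp [hN])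
  have hap : H.Adj a p := (mem_neighborFinset H a p).1 (by simp [hN])
  have haq : H.Adj a q := (mem_neighborFinset H a q).1 (by simp [hN])
  have hda : H.degree a = 3 := by
    rw [← card_neighborFinset_eq_degree, hN, Finset.card_insert_of_notMem (by simp [hxp, hxq]),
      Finset.card_pair (H.ne_of_adj hpq)]
  have hdx : H.degree x ≤ 4 := by have := hθ a x hax; omega
  have hdp : H.degree p ≤ 4 := by have := hθ a p hap; omega
  have hdq : H.degree q ≤ 4 := by have := hθ a q haq; omega
  have hdpq := hθ p q hpq
  have hX : ((conflictSet H (DelV H a) s(a, x)).erase s(p, q)).card ≤ 12 := by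
    have := card_conflictSet_erase_le (k := 7) (hθ a) (hθ x) hax hap haq hpq hxp hxq
    rw [hda] at this
    interval_cases H.degree x <;> omega
  have hPQ : (conflictSet (DelV H a) (DelV H a) s(p, q)).card < 12 := by
    have := card_conflictSet_opposite_le (k := 7) (hθ p) (hθ q) hap haq hpq
    have := Finset.card_le_card (conflictSet_mono (delV_le (G := H) (a := a)) s(p, q))
    interval_cases H.degree p <;> interval_cases H.degree q <;> omega
  have hP : (conflictSet H (DelV H a) s(a, p)).card ≤ 11 := by
    have := card_conflictSet_triangle_le (k := 7) (hθ a) (hθ p) hap haq hpq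
    rw [hda] at this
    interval_cases H.degree p <;> omega
  have hQ : (conflictSet H (DelV H a) s(a, q)).card ≤ 10 := by
    have := card_conflictSet_triangle_le (k := 7) (hθ a) (hθ q) haq hap hpq.symm
    rw [hda] at this
    interval_cases H.degree q <;> omega
  obtain ⟨F₀, hF₀⟩ := hHa.exists_isStrongEdgeColoring
  obtain ⟨F, hF, hFx⟩ := hF₀.exists_card_image_le s(p, q) _ hX hPQ
  refine hF.hasStrongColoring_of_neighborFinset_eq_triple hxp hxq (H.ne_of_adj hpq) hN
    (by omega) ?_ ?_
  · exact Nat.succ_lt_succ (Finset.card_image_le.trans_lt (by omega))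
  · exact Nat.add_lt_add_right (Finset.card_image_le.trans_lt (by omega)) 2

theorem hasStrongColoring_of_triangle
    (hθ : ∀ u w, H.Adj u w → H.degree u + H.degree w ≤ 7)
    (hap : H.Adj a p) (haq : H.Adj a q) (hpq : H.Adj p q) (hda : H.degree a ≤ 3)
    (hHa : HasStrongColoring (DelV H a) 13) : HasStrongColoring H 13 := by
  have hsub := pair_subset_neighborFinset hap haq
  have hcard : ({p, q} : Finset V).card = 2 := Finset.card_pair (H.ne_of_adj hpq)
  have hda' := Finset.card_le_card hsub
  rw [hcard, card_neighborFinset_eq_degree] at hda'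
  rcases (show H.degree a = 2 ∨ H.degree a = 3 by omega) with h2 | h3
  · refine hasStrongColoring_of_neighborFinset_eq_pair hθ hpq ?_ hHa
    exact (Finset.eq_of_subset_of_card_le hsub (by rw [hcard, card_neighborFinset_eq_degree, h2])).symm
  · obtain ⟨x, hxN, hx⟩ := Finset.exists_mem_notMem_of_card_lt_card (s := {p, q})
      (t := H.neighborFinset a) (by rw [hcard, card_neighborFinset_eq_degree, h3]; norm_num)
    have hN : H.neighborFinset a = {x, p, q} :=
      (Finset.eq_of_subset_of_card_le (Finset.insert_subset hxN hsub) (by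
        rw [Finset.card_insert_of_notMem hx, hcard, card_neighborFinset_eq_degree, h3])).symm
    simp only [Finset.mem_insert, Finset.mem_singleton, not_or] at hx
    rcases le_total (H.degree q) (H.degree p) with hd | hd
    · exact hasStrongColoring_of_neighborFinset_eq_triple hθ hpq hx.1 hx.2 hN hd hHa
    · exact hasStrongColoring_of_neighborFinset_eq_triple hθ hpq.symm hx.2 hx.1
        (by rw [hN, Finset.pair_comm]) hd hHa

end Triangle

/-- A minimal counterexample with θ ≤ 7, χ'ₛ > 13 contains no triangle. -/
theorem stmt6 [Fintype V] (H : SimpleGraph V) [DecidableRel H.Adj]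
    (hore : ∀ u w, H.Adj u w → H.degree u + H.degree w ≤ 7)
    (hnc : ¬ HasStrongColoring H 13)
    (hmin : ∀ v, HasStrongColoring (DelV H v) 13) :
    ¬ ∃ a b c : V, H.Adj a b ∧ H.Adj b c ∧ H.Adj a c := by
  classical
  rintro ⟨a, b, c, hab, hbc, hac⟩
  rcases le_or_gt (H.degree a) 3 with ha | ha
  · exact hnc (hasStrongColoring_of_triangle hore hab hac hbc ha (hmin a))
  · have hb : H.degree b ≤ 3 := by have := hore a b hab; omega
    exact hnc (hasStrongColoring_of_triangle hore hab.symm hbc hac hb (hmin b))
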